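/- Let H be a bialgebra over a commutative ring R. For all integers p, q ≥ 0, the identity (m⁽ᑫ⁾)^{⊗p} ∘ τ_{p,q} ∘ (Δ⁽ᵖ⁾)^{⊗q} = Δ⁽ᵖ⁾ ∘ m⁽ᑫ⁾ holds as R-linear maps H^{⊗q} → H^{⊗p}. -/

import Mathlib

open TensorProduct PiTensorProduct

variable (R H : Type) [CommRing R] [Ring H] [Bialgebra R H]

/-- The iterated product `m⁽ᑫ⁾ : H^{⊗q} → H` (`m⁽⁰⁾ = η`, `m⁽ᑫ⁺¹⁾ = m ∘ (m⁽ᑫ⁾ ⊗ id)`),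
i.e. the ordered product of the factors. -/
noncomputable def iterMul (q : ℕ) : (⨂[R] _ : Fin q, H) →ₗ[R] H :=
  PiTensorProduct.lift (MultilinearMap.mkPiAlgebraFin R q H)

/-- The iterated coproduct `Δ⁽ᵖ⁾ : H → H^{⊗p}`
(`Δ⁽⁰⁾ = ε`, `Δ⁽ᵖ⁺¹⁾ = (Δ⁽ᵖ⁾ ⊗ id) ∘ Δ`). -/
noncomputable def iterComul : (p : ℕ) → (H →ₗ[R] ⨂[R] _ : Fin p, H)
  | 0 => (PiTensorProduct.isEmptyEquiv (Fin 0)).symm.toLinearMap ∘ₗ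
      (Coalgebra.counit (R := R) (A := H))
  | p + 1 =>
      (PiTensorProduct.reindex R (fun _ => H) finSumFinEquiv).toLinearMap ∘ₗ
      (PiTensorProduct.tmulEquiv (ι := Fin p) (ι₂ := Fin 1) R H).toLinearMap ∘ₗ
      TensorProduct.map (iterComul p)
        (PiTensorProduct.subsingletonEquiv (0 : Fin 1)).symm.toLinearMap ∘ₗ
      (Coalgebra.comul (R := R) (A := H))

/-- The canonical "flattening" equivalence
`⨂_{i : Fin n} (⨂_{j : κ} H) ≃ ⨂_{(i,j) : Fin n × κ} H`. -/
noncomputable def flattenEquiv (κ : Type) :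
    (n : ℕ) → ((⨂[R] _ : Fin n, (⨂[R] _ : κ, H)) ≃ₗ[R] ⨂[R] _ : Fin n × κ, H)
  | 0 => (PiTensorProduct.isEmptyEquiv (Fin 0)).trans
      (PiTensorProduct.isEmptyEquiv (Fin 0 × κ)).symm
  | n + 1 =>
      (PiTensorProduct.reindex R (fun _ => (⨂[R] _ : κ, H)) finSumFinEquiv.symm).trans <|
      (PiTensorProduct.tmulEquiv (ι := Fin n) (ι₂ := Fin 1) R (⨂[R] _ : κ, H)).symm.trans <|
      (TensorProduct.congr (flattenEquiv κ n)
        (PiTensorProduct.subsingletonEquiv (0 : Fin 1))).trans <|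
      (PiTensorProduct.tmulEquiv (ι := Fin n × κ) (ι₂ := κ) R H).trans <|
      PiTensorProduct.reindex R (fun _ => H) <|
        (Equiv.sumCongr (Equiv.refl (Fin n × κ)) (Equiv.uniqueProd κ (Fin 1)).symm).trans <|
        (Equiv.sumProdDistrib (Fin n) (Fin 1) κ).symm.trans <|
        finSumFinEquiv.prodCongr (Equiv.refl κ)

/-- `(Δ⁽ᵖ⁾)^{⊗q} : H^{⊗q} → H^{⊗pq}`, where `H^{⊗pq}` is indexed by `Fin q × Fin p`
(`q` blocks, each of `p` factors). -/
noncomputable def comulBlocks (p q : ℕ) :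
    (⨂[R] _ : Fin q, H) →ₗ[R] ⨂[R] _ : Fin q × Fin p, H :=
  (flattenEquiv R H (Fin p) q).toLinearMap ∘ₗ
    PiTensorProduct.map (fun _ : Fin q => iterComul R H p)

/-- `(m⁽ᑫ⁾)^{⊗p} : H^{⊗pq} → H^{⊗p}`, where `H^{⊗pq}` is indexed by `Fin p × Fin q`
(`p` blocks, each of `q` factors). -/
noncomputable def mulBlocks (p q : ℕ) :
    (⨂[R] _ : Fin p × Fin q, H) →ₗ[R] ⨂[R] _ : Fin p, H :=
  PiTensorProduct.map (fun _ : Fin p => iterMul R H q) ∘ₗ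
    (flattenEquiv R H (Fin q) p).symm.toLinearMap

/-- The "transpose" permutation `τ_{p,q}` of the tensor factors of `H^{⊗pq}`, sending the
`i`-th factor of the `j`-th block to the `j`-th factor of the `i`-th block. -/
noncomputable def tauPerm (p q : ℕ) :
    (⨂[R] _ : Fin q × Fin p, H) ≃ₗ[R] ⨂[R] _ : Fin p × Fin q, H :=
  PiTensorProduct.reindex R (fun _ => H) (Equiv.prodComm (Fin q) (Fin p))

section Aux

variable {R H}

lemma subsingletonEquiv_symm_eq {ι : Type} [Subsingleton ι] (i₀ : ι) (a : H) :
    (PiTensorProduct.subsingletonEquiv (R := R) (s := fun _ : ι => H) i₀).symm a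
      = tprod R fun _ => a := by
  apply (PiTensorProduct.subsingletonEquiv (R := R) (s := fun _ : ι => H) i₀).injective
  simp

lemma isEmptyEquiv_symm_eq {ι : Type} [IsEmpty ι] (r : R) :
    (PiTensorProduct.isEmptyEquiv (R := R) (s := fun _ : ι => H) ι).symm r
      = r • (1 : ⨂[R] _ : ι, H) := by
  apply (PiTensorProduct.isEmptyEquiv (R := R) (s := fun _ : ι => H) ι).injective
  rw [LinearEquiv.apply_symm_apply, map_smul, PiTensorProduct.one_def,
    PiTensorProduct.isEmptyEquiv_apply_tprod, smul_eq_mul, mul_one]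

lemma reindex_mul {ι ι₂ : Type} (e : ι ≃ ι₂) (x y : ⨂[R] _ : ι, H) :
    PiTensorProduct.reindex R (fun _ => H) e (x * y)
      = PiTensorProduct.reindex R (fun _ => H) e x
        * PiTensorProduct.reindex R (fun _ => H) e y := by
  have h : (LinearMap.mul R (⨂[R] _ : ι, H)).compr₂
        (PiTensorProduct.reindex R (fun _ => H) e).toLinearMap
      = (LinearMap.mul R (⨂[R] _ : ι₂, H)).compl₁₂
          (PiTensorProduct.reindex R (fun _ => H) e).toLinearMap
          (PiTensorProduct.reindex R (fun _ => H) e).toLinearMap := by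
    ext a b
    show PiTensorProduct.reindex R (fun _ => H) e (tprod R a * tprod R b)
      = PiTensorProduct.reindex R (fun _ => H) e (tprod R a)
        * PiTensorProduct.reindex R (fun _ => H) e (tprod R b)
    rw [PiTensorProduct.tprod_mul_tprod, PiTensorProduct.reindex_tprod,
      PiTensorProduct.reindex_tprod, PiTensorProduct.reindex_tprod,
      PiTensorProduct.tprod_mul_tprod]
    rfl
  exact DFunLike.congr_fun (DFunLike.congr_fun h x) y

set_option maxHeartbeats 1000000 in
set_option synthInstance.maxHeartbeats 400000 in
lemma tmulEquiv_mul {ι ι₂ : Type} (x y : (⨂[R] _ : ι, H) ⊗[R] (⨂[R] _ : ι₂, H)) :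
    PiTensorProduct.tmulEquiv (ι := ι) (ι₂ := ι₂) R H (x * y)
      = PiTensorProduct.tmulEquiv (ι := ι) (ι₂ := ι₂) R H x
        * PiTensorProduct.tmulEquiv (ι := ι) (ι₂ := ι₂) R H y := by
  have h : (LinearMap.mul R ((⨂[R] _ : ι, H) ⊗[R] (⨂[R] _ : ι₂, H))).compr₂
        (PiTensorProduct.tmulEquiv (ι := ι) (ι₂ := ι₂) R H).toLinearMap
      = (LinearMap.mul R (⨂[R] _ : ι ⊕ ι₂, H)).compl₁₂
          (PiTensorProduct.tmulEquiv (ι := ι) (ι₂ := ι₂) R H).toLinearMap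
          (PiTensorProduct.tmulEquiv (ι := ι) (ι₂ := ι₂) R H).toLinearMap := by
    ext a b c d
    show PiTensorProduct.tmulEquiv (ι := ι) (ι₂ := ι₂) R H
        ((tprod R a ⊗ₜ[R] tprod R b) * (tprod R c ⊗ₜ[R] tprod R d))
      = PiTensorProduct.tmulEquiv (ι := ι) (ι₂ := ι₂) R H (tprod R a ⊗ₜ[R] tprod R b)
        * PiTensorProduct.tmulEquiv (ι := ι) (ι₂ := ι₂) R H (tprod R c ⊗ₜ[R] tprod R d)
    rw [Algebra.TensorProduct.tmul_mul_tmul, PiTensorProduct.tprod_mul_tprod,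
      PiTensorProduct.tprod_mul_tprod, PiTensorProduct.tmulEquiv_apply,
      PiTensorProduct.tmulEquiv_apply, PiTensorProduct.tmulEquiv_apply,
      PiTensorProduct.tprod_mul_tprod]
    congr 1
    funext i
    cases i <;> rfl
  exact DFunLike.congr_fun (DFunLike.congr_fun h x) y

lemma tp_map_mul {A B C D : Type} [Ring A] [Ring B] [Ring C] [Ring D]
    [Algebra R A] [Algebra R B] [Algebra R C] [Algebra R D]
    (f : A →ₗ[R] C) (g : B →ₗ[R] D)
    (hf : ∀ a a', f (a * a') = f a * f a') (hg : ∀ b b', g (b * b') = g b * g b')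
    (x y : A ⊗[R] B) :
    TensorProduct.map f g (x * y)
      = TensorProduct.map f g x * TensorProduct.map f g y := by
  induction x with
  | zero => simp
  | tmul a b =>
    induction y with
    | zero => simp
    | tmul c d => simp [Algebra.TensorProduct.tmul_mul_tmul, hf, hg]
    | add u v hu hv => simp only [mul_add, map_add, hu, hv]
  | add u v hu hv => simp only [add_mul, map_add, hu, hv]

lemma iterComul_one (p : ℕ) : iterComul R H p 1 = 1 := by
  induction p with
  | zero =>
    rw [iterComul]
    simp only [LinearMap.comp_apply, LinearEquiv.coe_coe, Bialgebra.counit_one,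
      isEmptyEquiv_symm_eq, one_smul]
  | succ p ih =>
    rw [iterComul]
    simp only [LinearMap.comp_apply, LinearEquiv.coe_coe, Bialgebra.comul_one,
      Algebra.TensorProduct.one_def, TensorProduct.map_tmul, ih,
      subsingletonEquiv_symm_eq]
    rw [PiTensorProduct.one_def, PiTensorProduct.tmulEquiv_apply,
      PiTensorProduct.reindex_tprod, PiTensorProduct.one_def]
    congr 1
    funext i
    rcases h : finSumFinEquiv.symm i with j | j <;> simp [h]

lemma iterComul_mul (p : ℕ) (a b : H) :
    iterComul R H p (a * b) = iterComul R H p a * iterComul R H p b := by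
  induction p generalizing a b with
  | zero =>
    rw [iterComul]
    simp only [LinearMap.comp_apply, LinearEquiv.coe_coe, Bialgebra.counit_mul,
      isEmptyEquiv_symm_eq]
    rw [smul_mul_assoc, one_mul, smul_smul]
  | succ p ih =>
    rw [iterComul]
    simp only [LinearMap.comp_apply, LinearEquiv.coe_coe, Bialgebra.comul_mul]
    rw [tp_map_mul _ _ ih (fun c c' => ?_), tmulEquiv_mul, reindex_mul]
    simp only [LinearEquiv.coe_coe, subsingletonEquiv_symm_eq]
    rw [PiTensorProduct.tprod_mul_tprod]
    rfl

lemma iterComul_list_prod (p q : ℕ) (x : Fin q → H) :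
    iterComul R H p (List.ofFn x).prod = (List.ofFn fun j => iterComul R H p (x j)).prod := by
  let f : H →* (⨂[R] _ : Fin p, H) :=
    { toFun := iterComul R H p, map_one' := iterComul_one p, map_mul' := iterComul_mul p }
  simpa [f, List.map_ofFn, Function.comp_def] using f.map_list_prod (List.ofFn x)

lemma list_prod_tprod {p : ℕ} (q : ℕ) (x : Fin q → Fin p → H) :
    (List.ofFn fun j => tprod R (x j)).prod
      = tprod R fun i => (List.ofFn fun j => x j i).prod := by
  induction q with
  | zero =>
    simp only [List.ofFn_zero, List.prod_nil, PiTensorProduct.one_def]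
    rfl
  | succ q ih =>
    rw [List.ofFn_succ, List.prod_cons, ih fun j => x j.succ,
      PiTensorProduct.tprod_mul_tprod]
    congr 1
    funext i
    rw [Pi.mul_apply, List.ofFn_succ, List.prod_cons]

lemma iterMul_tprod (q : ℕ) (x : Fin q → H) :
    iterMul R H q (tprod R x) = (List.ofFn x).prod := by
  simp [iterMul]

lemma flattenEquiv_tprod (κ : Type) (n : ℕ) (x : Fin n → κ → H) :
    flattenEquiv R H κ n (tprod R fun i => tprod R (x i))
      = tprod R fun p => x p.1 p.2 := by
  induction n with
  | zero =>
    rw [flattenEquiv]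
    simp only [LinearEquiv.trans_apply, PiTensorProduct.isEmptyEquiv_apply_tprod]
    apply (PiTensorProduct.isEmptyEquiv (Fin 0 × κ)).injective
    rw [LinearEquiv.apply_symm_apply, PiTensorProduct.isEmptyEquiv_apply_tprod]
  | succ n ih =>
    rw [flattenEquiv]
    simp only [LinearEquiv.trans_apply, PiTensorProduct.reindex_tprod, Equiv.symm_symm,
      Function.comp_def]
    rw [PiTensorProduct.tmulEquiv_symm_apply]
    simp only [TensorProduct.congr_tmul, PiTensorProduct.subsingletonEquiv_apply_tprod, ih]
    rw [PiTensorProduct.tmulEquiv_apply, PiTensorProduct.reindex_tprod]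
    congr 1
    funext pr
    obtain ⟨i, k⟩ := pr
    simp only [Function.comp_apply, Equiv.symm_trans_apply, Equiv.prodCongr_symm,
      Equiv.refl_symm, Equiv.prodCongr_apply, Equiv.coe_refl, Prod.map_apply, id_eq,
      Equiv.symm_symm, Equiv.sumCongr_symm, Equiv.sumCongr_apply]
    rcases h : finSumFinEquiv.symm i with j | j
    · have hi : i = Fin.castAdd 1 j := by
        rw [← finSumFinEquiv_apply_left, ← h, Equiv.apply_symm_apply]
      subst hi
      simp [h]
    · obtain rfl : j = (0 : Fin 1) := Subsingleton.elim _ _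
      have hi : i = Fin.natAdd n 0 := by
        rw [← finSumFinEquiv_apply_right, ← h, Equiv.apply_symm_apply]
      subst hi
      simp [h, Equiv.uniqueProd]

lemma mulBlocks_tprod (p q : ℕ) (h : Fin p × Fin q → H) :
    mulBlocks R H p q (tprod R h)
      = tprod R fun i => (List.ofFn fun j => h (i, j)).prod := by
  have hf : (flattenEquiv R H (Fin q) p).symm (tprod R h)
      = tprod R fun i => tprod R fun j => h (i, j) := by
    apply (flattenEquiv R H (Fin q) p).injective
    rw [LinearEquiv.apply_symm_apply, flattenEquiv_tprod]
  rw [mulBlocks, LinearMap.comp_apply, LinearEquiv.coe_coe, hf,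
    PiTensorProduct.map_tprod]
  congr 1
  funext i
  rw [iterMul_tprod]

lemma key_mul (p q : ℕ) (y : Fin q → ⨂[R] _ : Fin p, H) :
    mulBlocks R H p q (tauPerm R H p q (flattenEquiv R H (Fin p) q (tprod R y)))
      = (List.ofFn y).prod := by
  have h : mulBlocks R H p q ∘ₗ (tauPerm R H p q).toLinearMap
      = PiTensorProduct.lift (MultilinearMap.mkPiAlgebraFin R q (⨂[R] _ : Fin p, H)) ∘ₗ
        (flattenEquiv R H (Fin p) q).symm.toLinearMap := by
    ext g
    simp only [LinearMap.compMultilinearMap_apply, LinearMap.comp_apply, LinearEquiv.coe_coe]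
    have hsymm : (flattenEquiv R H (Fin p) q).symm (tprod R g)
        = tprod R fun j => tprod R fun i => g (j, i) := by
      apply (flattenEquiv R H (Fin p) q).injective
      rw [LinearEquiv.apply_symm_apply, flattenEquiv_tprod]
    rw [hsymm, PiTensorProduct.lift.tprod, MultilinearMap.mkPiAlgebraFin_apply,
      list_prod_tprod, tauPerm, PiTensorProduct.reindex_tprod]
    exact mulBlocks_tprod p q fun pr => g (pr.2, pr.1)
  have h2 := DFunLike.congr_fun h (flattenEquiv R H (Fin p) q (tprod R y))
  simpa only [LinearMap.comp_apply, LinearEquiv.coe_coe, LinearEquiv.symm_apply_apply,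
    PiTensorProduct.lift.tprod, MultilinearMap.mkPiAlgebraFin_apply] using h2

end Aux

/-- STATEMENT 8: for a bialgebra `H` over a commutative ring `R` and all `p, q ≥ 0`,
`(m⁽ᑫ⁾)^{⊗p} ∘ τ_{p,q} ∘ (Δ⁽ᵖ⁾)^{⊗q} = Δ⁽ᵖ⁾ ∘ m⁽ᑫ⁾` as `R`-linear maps
`H^{⊗q} → H^{⊗p}`. -/
theorem bialgebra_blocks_identity (p q : ℕ) :
    mulBlocks R H p q ∘ₗ (tauPerm R H p q).toLinearMap ∘ₗ comulBlocks R H p q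
      = iterComul R H p ∘ₗ iterMul R H q := by
  ext x
  simp only [LinearMap.compMultilinearMap_apply, LinearMap.comp_apply, LinearEquiv.coe_coe]
  rw [comulBlocks]
  simp only [LinearMap.comp_apply, LinearEquiv.coe_coe, PiTensorProduct.map_tprod]
  rw [key_mul p q fun j => iterComul R H p (x j), iterMul_tprod, iterComul_list_prod]
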